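/- Let N ≥ 0 and 0 ≤ i ≤ N be integers. Then ∫_{−1}^{1} ((1−c)/2)^{2+2(N−i)} · (P_i^{(2N+3−2i,0)}(c))² dc = 2/(2N+3−2i). In particular this value is a positive constant depending only on N and i. -/

import Mathlib

/-!
Substituting `c = 1 - 2u` turns the integral into `2 ∫₀¹ u^a S(u)² du`, where `a = 2 + 2(N - i)`
and `S(u) = P_i^{(a+1,0)}(1 - 2u)` is a polynomial of degree `≤ i` with `S(0) = C(i+a+1, i)`.
Expanding `S` into beta integrals, the moment `∫₀¹ u^(a+1+k) S` is an alternating binomial sum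
`∑ₛ (-1)^s C(i,s) Q(s)` with `Q` a polynomial of degree `k`, i.e. an `i`-th forward difference,
which vanishes for `k < i`. Hence only the constant term of one factor `S` survives:
`∫₀¹ u^a S² = S(0) ∫₀¹ u^a S = C(i+a+1, i) · a! i! / (i+a+1)! = 1/(a+1)`.
-/

open Finset in
/-- The Jacobi polynomial `P_n^{(α,0)}` (as a real function), defined by the explicit
formula `P_n^{(α,0)}(x) = ∑_{s=0}^{n} C(n+α, n−s)·C(n, s)·((x−1)/2)^s·((x+1)/2)^{n−s}`. -/
noncomputable def jacobiP (n α : ℕ) (x : ℝ) : ℝ :=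
  ∑ s ∈ range (n + 1),
    ((n + α).choose (n - s) : ℝ) * (n.choose s : ℝ) * ((x - 1) / 2) ^ s * ((x + 1) / 2) ^ (n - s)

open Finset Polynomial Nat

noncomputable def shiftedJacobi (n α : ℕ) : ℝ[X] :=
  ∑ s ∈ range (n + 1),
    C ((n + α).choose (n - s) * n.choose s : ℝ) * (-X) ^ s * (1 - X) ^ (n - s)

theorem jacobiP_one_sub_two_mul (n α : ℕ) (u : ℝ) :
    jacobiP n α (1 - 2 * u) = (shiftedJacobi n α).eval u := by
  simp only [jacobiP, shiftedJacobi, eval_finsetSum, eval_mul, eval_C, eval_pow, eval_neg,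
    eval_sub, eval_one, eval_X]
  congr! 3 <;> ring

theorem natDegree_shiftedJacobi_le (n α : ℕ) : (shiftedJacobi n α).natDegree ≤ n := by
  refine natDegree_sum_le_of_forall_le _ _ fun s hs => ?_
  have hsn : s ≤ n := Nat.lt_succ_iff.mp (mem_range.mp hs)
  compute_degree
  omega

theorem shiftedJacobi_eval_zero (n α : ℕ) : (shiftedJacobi n α).eval 0 = (n + α).choose n := by
  simp [shiftedJacobi, eval_finsetSum, sum_range_succ']

theorem integral_pow_mul_one_sub_pow (p q : ℕ) :
    ∫ u in (0 : ℝ)..1, u ^ p * (1 - u) ^ q = (p ! * q ! / (p + q + 1)! : ℝ) := by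
  induction q generalizing p with
  | zero =>
    simp only [pow_zero, mul_one, integral_pow, factorial_zero, add_zero, factorial_succ]
    push_cast
    field_simp
    simp
  | succ q ih =>
    have hsplit : ∀ u : ℝ,
        u ^ p * (1 - u) ^ (q + 1) = u ^ p * (1 - u) ^ q - u ^ (p + 1) * (1 - u) ^ q :=
      fun u => by ring
    simp_rw [hsplit]
    rw [intervalIntegral.integral_sub (by apply Continuous.intervalIntegrable; fun_prop)
      (by apply Continuous.intervalIntegrable; fun_prop), ih, ih,
      show p + 1 + q + 1 = p + q + 1 + 1 by ring, show p + (q + 1) + 1 = p + q + 1 + 1 by ring]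
    simp only [Nat.factorial_succ, Nat.cast_mul, Nat.cast_add, Nat.cast_one]
    field_simp
    ring

theorem sum_range_neg_one_pow_mul_choose_mul_eval_eq_zero {n : ℕ} {P : ℝ[X]}
    (hP : P.natDegree < n) :
    ∑ s ∈ range (n + 1), (-1 : ℝ) ^ s * n.choose s * P.eval (s : ℝ) = 0 := by
  have hΔ := congr_fun (fwdDiff_iter_eq_zero_of_degree_lt hP) 0
  rw [fwdDiff_iter_eq_sum_shift] at hΔ
  simp only [zsmul_eq_mul, nsmul_eq_mul, Int.cast_mul, Int.cast_pow, Int.cast_neg, Int.cast_one,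
    Int.cast_natCast, mul_one, zero_add, Pi.zero_apply] at hΔ
  rw [← mul_eq_zero_of_right ((-1 : ℝ) ^ n) hΔ, mul_sum]
  refine sum_congr rfl fun s hs => ?_
  have hsn : s ≤ n := Nat.lt_succ_iff.mp (mem_range.mp hs)
  rw [show (-1 : ℝ) ^ s = (-1) ^ n * (-1) ^ (n - s) by
    rw [← pow_add, show n + (n - s) = s + 2 * (n - s) by omega, pow_add, pow_mul]; simp]
  ring

theorem sum_range_neg_one_pow_mul_choose_div (n b : ℕ) :
    ∑ s ∈ range (n + 1), (-1 : ℝ) ^ s * n.choose s / (b + 1 + s) = b ! * n ! / (b + n + 1)! := by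
  rw [← integral_pow_mul_one_sub_pow]
  have hexp : ∀ u : ℝ, u ^ b * (1 - u) ^ n
      = ∑ s ∈ range (n + 1), (-1) ^ s * n.choose s * u ^ (b + s) := fun u => by
    rw [show 1 - u = -u + 1 by ring, add_pow, mul_sum]
    refine sum_congr rfl fun s _ => ?_
    rw [neg_pow, pow_add]
    ring
  simp_rw [hexp]
  rw [intervalIntegral.integral_finsetSum fun s _ => by
    apply Continuous.intervalIntegrable; fun_prop]
  refine sum_congr rfl fun s _ => ?_
  rw [intervalIntegral.integral_const_mul, integral_pow]
  push_cast
  ring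

theorem integral_pow_mul_shiftedJacobi (n α m : ℕ) :
    ∫ u in (0 : ℝ)..1, u ^ m * (shiftedJacobi n α).eval u
      = (n + α)! / (n + m + 1)! * ∑ s ∈ range (n + 1),
          (-1 : ℝ) ^ s * n.choose s * ((m + s)! / (α + s)! : ℝ) := by
  simp only [shiftedJacobi, eval_finsetSum, eval_mul, eval_C, eval_pow, eval_neg, eval_sub,
    eval_one, eval_X, mul_sum]
  rw [intervalIntegral.integral_finsetSum fun s _ => by
    apply Continuous.intervalIntegrable; fun_prop]
  refine sum_congr rfl fun s hs => ?_
  have hsn : s ≤ n := Nat.lt_succ_iff.mp (mem_range.mp hs)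
  have hterm : ∀ u : ℝ,
      u ^ m * ((n + α).choose (n - s) * n.choose s * (-u) ^ s * (1 - u) ^ (n - s))
        = ((n + α).choose (n - s) * n.choose s * (-1) ^ s) * (u ^ (m + s) * (1 - u) ^ (n - s)) :=
    fun u => by rw [neg_pow, pow_add]; ring
  simp_rw [hterm]
  rw [intervalIntegral.integral_const_mul, integral_pow_mul_one_sub_pow,
    show m + s + (n - s) + 1 = n + m + 1 by omega]
  have hchoose := Nat.choose_mul_factorial_mul_factorial (show n - s ≤ n + α by omega)
  rw [show n + α - (n - s) = α + s by omega] at hchoose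
  rw [← hchoose]
  push_cast
  field_simp

theorem integral_pow_add_mul_shiftedJacobi_eq_zero {n k : ℕ} (α : ℕ) (hk : k < n) :
    ∫ u in (0 : ℝ)..1, u ^ (α + k) * (shiftedJacobi n α).eval u = 0 := by
  set P : ℝ[X] := (ascPochhammer ℝ k).comp (X + C ((α : ℝ) + 1))
  have hP : P.natDegree < n := by
    rwa [natDegree_comp, ascPochhammer_natDegree, natDegree_X_add_C, mul_one]
  have hratio : ∀ s : ℕ, ((α + k + s)! / (α + s)! : ℝ) = P.eval (s : ℝ) := fun s => by
    rw [eval_comp, eval_add, eval_X, eval_C, show α + k + s = α + s + k by ring,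
      ← Nat.factorial_mul_ascFactorial, Nat.cast_mul, Nat.cast_ascFactorial ℝ]
    field_simp
    push_cast
    ring_nf
  simp_rw [integral_pow_mul_shiftedJacobi, hratio,
    sum_range_neg_one_pow_mul_choose_mul_eval_eq_zero hP, mul_zero]

theorem integral_pow_mul_shiftedJacobi_add_one (n a : ℕ) :
    ∫ u in (0 : ℝ)..1, u ^ a * (shiftedJacobi n (a + 1)).eval u = a ! * n ! / (n + a + 1)! := by
  have hratio : ∀ s : ℕ, ((a + s)! / (a + 1 + s)! : ℝ) = 1 / (a + 1 + s) := fun s => by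
    rw [show a + 1 + s = a + s + 1 by ring, Nat.factorial_succ]
    push_cast
    field_simp
    ring
  simp_rw [integral_pow_mul_shiftedJacobi, hratio, ← mul_div_assoc, mul_one,
    sum_range_neg_one_pow_mul_choose_div, show n + (a + 1) = n + a + 1 by ring,
    show a + n + 1 = n + a + 1 by ring]
  field_simp

theorem integral_pow_mul_eval_mul_shiftedJacobi {n : ℕ} {p : ℝ[X]} (hp : p.natDegree ≤ n)
    (a : ℕ) :
    ∫ u in (0 : ℝ)..1, u ^ a * p.eval u * (shiftedJacobi n (a + 1)).eval u
      = p.eval 0 * (a ! * n ! / (n + a + 1)!) := by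
  have hexpand : ∀ u : ℝ, u ^ a * p.eval u * (shiftedJacobi n (a + 1)).eval u
      = ∑ j ∈ range (n + 1), p.coeff j * (u ^ (a + j) * (shiftedJacobi n (a + 1)).eval u) :=
    fun u => by
      rw [eval_eq_sum_range' (Nat.lt_succ_of_le hp), mul_sum, sum_mul]
      refine sum_congr rfl fun j _ => ?_
      ring
  simp_rw [hexpand]
  rw [intervalIntegral.integral_finsetSum fun j _ => by
    apply Continuous.intervalIntegrable; fun_prop]
  simp_rw [intervalIntegral.integral_const_mul]
  rw [sum_range_succ', sum_eq_zero fun j hj => by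
    rw [show a + (j + 1) = (a + 1) + j by ring,
      integral_pow_add_mul_shiftedJacobi_eq_zero _ (mem_range.mp hj), mul_zero]]
  rw [zero_add, add_zero, integral_pow_mul_shiftedJacobi_add_one, coeff_zero_eq_eval_zero]

theorem integral_pow_mul_shiftedJacobi_sq (n a : ℕ) :
    ∫ u in (0 : ℝ)..1, u ^ a * (shiftedJacobi n (a + 1)).eval u ^ 2 = 1 / (a + 1) := by
  simp_rw [sq, ← mul_assoc]
  rw [integral_pow_mul_eval_mul_shiftedJacobi (natDegree_shiftedJacobi_le n (a + 1)),
    shiftedJacobi_eval_zero]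
  have hchoose := Nat.choose_mul_factorial_mul_factorial (show n ≤ n + (a + 1) by omega)
  rw [show n + (a + 1) - n = a + 1 by omega, Nat.factorial_succ] at hchoose
  have hchoose_ne : ((n + (a + 1)).choose n : ℝ) ≠ 0 := mod_cast (Nat.choose_pos (by omega)).ne'
  rw [show n + a + 1 = n + (a + 1) by ring, ← hchoose]
  push_cast
  field_simp

theorem integral_neg_one_one_eq_two_mul (f : ℝ → ℝ) :
    ∫ c in (-1 : ℝ)..1, f c = 2 * ∫ u in (0 : ℝ)..1, f (1 - 2 * u) := by
  have h := intervalIntegral.smul_integral_comp_sub_mul (a := 0) (b := 1) f 2 1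
  rw [smul_eq_mul, mul_zero, mul_one, sub_zero, show (1 : ℝ) - 2 = -1 by norm_num] at h
  exact h.symm

theorem jacobi_weighted_norm (N i : ℕ) (hiN : i ≤ N) :
    (∫ c in (-1 : ℝ)..1,
        ((1 - c) / 2) ^ (2 + 2 * (N - i)) * (jacobiP i (2 * N + 3 - 2 * i) c) ^ 2
      = 2 / (2 * (N : ℝ) + 3 - 2 * (i : ℝ)))
    ∧ 0 < 2 / (2 * (N : ℝ) + 3 - 2 * (i : ℝ)) := by
  set a := 2 + 2 * (N - i)
  have ha : (2 * N + 3 - 2 * i : ℕ) = a + 1 := by omega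
  have haR : 2 * (N : ℝ) + 3 - 2 * i = a + 1 := by
    simp only [a]; push_cast [hiN]; ring
  rw [ha, haR]
  refine ⟨?_, by positivity⟩
  rw [integral_neg_one_one_eq_two_mul]
  simp_rw [jacobiP_one_sub_two_mul, show ∀ u : ℝ, (1 - (1 - 2 * u)) / 2 = u from fun u => by ring,
    integral_pow_mul_shiftedJacobi_sq]
  ring
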